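/- arXiv:1311.6111 — 2 statements merged into one kernel-verified Lean document; each statement's English description precedes it below -/
import Mathlib

section
/- Let $G$ be a group generated by subgroups $K_1, \dots, K_n$, each containing a subgroup $K$. Let $Y$ be a topological space with a transitive continuous $G$-action, and let $y \in Y$. If for each $i$ the orbit $Ky$ is dense in the orbit $K_i y$, then $Ky$ is dense in $Y$. -/
/-!
The closure `D` of `K • {y}` is closed and each `Kᵢ` moves `K • {y}` into `Kᵢ • {y} ⊆ D`, so by
continuity each `Kᵢ` maps `D` into itself, i.e. lies in the set-stabilizer of `D`. Since the `Kᵢ`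
generate `G`, the whole group stabilizes `D`, and a nonempty `G`-invariant set of a transitive
`G`-space is everything.
-/

open scoped Pointwise
open MulAction

theorem MulAction.le_stabilizer_of_smul_set_subset {G α : Type*} [Group G] [MulAction G α]
    {H : Subgroup G} {s : Set α} (h : ∀ g ∈ H, g • s ⊆ s) : H ≤ stabilizer G s := fun g hg =>
  mem_stabilizer_iff.2 <| (h g hg).antisymm <| Set.subset_smul_set_iff.2 (h g⁻¹ (inv_mem hg))

theorem MulAction.eq_univ_of_stabilizer_eq_top {G α : Type*} [Group G] [MulAction G α]
    [IsPretransitive G α] {s : Set α} (hs : s.Nonempty) (h : stabilizer G s = ⊤) :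
    s = Set.univ := by
  obtain ⟨y, hy⟩ := hs
  refine Set.eq_univ_of_forall fun x => ?_
  obtain ⟨g, rfl⟩ := exists_smul_eq G y x
  rw [← mem_stabilizer_iff.1 (h ▸ Subgroup.mem_top g : g ∈ stabilizer G s)]
  exact Set.smul_mem_smul_set hy

theorem MulAction.le_stabilizer_closure_smul_singleton {G Y : Type*} [Group G]
    [TopologicalSpace Y] [MulAction G Y] [ContinuousConstSMul G Y] {K H : Subgroup G} (hKH : K ≤ H)
    {y : Y} (hH : (H : Set G) • ({y} : Set Y) ⊆ closure ((K : Set G) • ({y} : Set Y))) :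
    H ≤ stabilizer G (closure ((K : Set G) • ({y} : Set Y))) := by
  refine le_stabilizer_of_smul_set_subset fun h hh => ?_
  have hmove : h • ((K : Set G) • ({y} : Set Y)) ⊆ (H : Set G) • ({y} : Set Y) := by
    rintro _ ⟨_, ⟨k, hk, y, rfl, rfl⟩, rfl⟩
    exact ⟨h * k, mul_mem hh (hKH hk), y, rfl, mul_smul h k y⟩
  rw [← closure_smul]
  exact closure_minimal (hmove.trans hH) isClosed_closure

theorem dense_orbit_of_dense_in_generating_subgroups
    {G Y : Type*} [Group G] [TopologicalSpace Y] [MulAction G Y]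
    [MulAction.IsPretransitive G Y]
    (hcont : ∀ g : G, Continuous fun x : Y => g • x)
    {n : ℕ} (K : Subgroup G) (Ki : Fin n → Subgroup G)
    (hKK : ∀ i, K ≤ Ki i)
    (hgen : Subgroup.closure (⋃ i, (Ki i : Set G)) = ⊤)
    (y : Y)
    (hdense : ∀ i, ((Ki i : Set G) • ({y} : Set Y)) ⊆
      closure ((K : Set G) • ({y} : Set Y))) :
    Dense ((K : Set G) • ({y} : Set Y)) := by
  have : ContinuousConstSMul G Y := ⟨hcont⟩
  have hstab : stabilizer G (closure ((K : Set G) • ({y} : Set Y))) = ⊤ := by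
    refine top_unique (hgen ▸ (Subgroup.closure_le _).2 (Set.iUnion_subset fun i => ?_))
    exact le_stabilizer_closure_smul_singleton (hKK i) (hdense i)
  have hy : y ∈ closure ((K : Set G) • ({y} : Set Y)) :=
    subset_closure ⟨1, K.one_mem, y, rfl, one_smul G y⟩
  exact dense_iff_closure_eq.2 (eq_univ_of_stabilizer_eq_top ⟨y, hy⟩ hstab)
end

section
/- Let $G$ be a group generated by two subgroups $K_1$ and $K_2$, both containing a subgroup $K$. For a transitive continuous action of $G$ on a topological space $Y$ and a point $y \in Y$, suppose $Ky$ is dense in $K_1 y$ and dense in $K_2 y$. Then for every $l \geq 0$, the orbit $Ky$ is dense in the set $O_l := K_1 K_2 K_1 K_2 \cdots K_1 K_2 \, y$ ($l$ alternating factors $K_1 K_2$). -/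
/-!
Since each `g` acts continuously and `g K ⊆ Kᵢ` for `g ∈ Kᵢ`, density of `K y` in `Kᵢ y` makes
`closure (K y)` invariant under `K₁` and `K₂`; it therefore absorbs every alternating product.
-/

open scoped Pointwise

section

variable {G Y : Type*} [Group G] [MulAction G Y]

theorem Subgroup.smul_set_subset_of_le {K H : Subgroup G} (hKH : K ≤ H) {g : G} (hg : g ∈ H)
    (s : Set Y) : g • ((K : Set G) • s) ⊆ (H : Set G) • s := by
  rintro _ ⟨_, ⟨k, hk, x, hx, rfl⟩, rfl⟩
  exact ⟨g * k, mul_mem hg (hKH hk), x, hx, mul_smul g k x⟩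

theorem smul_closure_smul_subset_of_le [TopologicalSpace Y] [ContinuousConstSMul G Y]
    {K H : Subgroup G} (hKH : K ≤ H) {s : Set Y}
    (hs : (H : Set G) • s ⊆ closure ((K : Set G) • s)) :
    (H : Set G) • closure ((K : Set G) • s) ⊆ closure ((K : Set G) • s) := by
  rintro _ ⟨g, hg, z, hz, rfl⟩
  have hHs : closure ((H : Set G) • s) ⊆ closure ((K : Set G) • s) :=
    closure_minimal hs isClosed_closure
  exact hHs <| closure_mono (Subgroup.smul_set_subset_of_le hKH hg s)
    (smul_closure_subset g _ ⟨z, hz, rfl⟩)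

end

theorem dense_in_alternating_products_general
    {G Y : Type*} [Group G] [TopologicalSpace Y] [MulAction G Y]
    (hcont : ∀ g : G, Continuous fun x : Y => g • x)
    (K K₁ K₂ : Subgroup G)
    (hK1 : K ≤ K₁) (hK2 : K ≤ K₂)
    (y : Y)
    (hdense1 : ((K₁ : Set G) • ({y} : Set Y)) ⊆ closure ((K : Set G) • ({y} : Set Y)))
    (hdense2 : ((K₂ : Set G) • ({y} : Set Y)) ⊆ closure ((K : Set G) • ({y} : Set Y)))
    (O : ℕ → Set Y)
    (hO0 : O 0 = {y})
    (hOsucc : ∀ l, O (l + 1) = (K₁ : Set G) • ((K₂ : Set G) • O l)) :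
    ∀ l, O l ⊆ closure ((K : Set G) • ({y} : Set Y)) := by
  have : ContinuousConstSMul G Y := ⟨hcont⟩
  intro l
  induction l with
  | zero =>
    rw [hO0, Set.singleton_subset_iff]
    exact subset_closure ⟨1, one_mem K, y, rfl, one_smul G y⟩
  | succ l ih =>
    rw [hOsucc]
    calc (K₁ : Set G) • ((K₂ : Set G) • O l)
        ⊆ (K₁ : Set G) • closure ((K : Set G) • ({y} : Set Y)) :=
          Set.smul_subset_smul_left <| (Set.smul_subset_smul_left ih).trans
            (smul_closure_smul_subset_of_le hK2 hdense2)
      _ ⊆ closure ((K : Set G) • ({y} : Set Y)) :=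
          smul_closure_smul_subset_of_le hK1 hdense1

theorem dense_in_alternating_products
    {G Y : Type*} [Group G] [TopologicalSpace Y] [MulAction G Y]
    [MulAction.IsPretransitive G Y]
    (hcont : ∀ g : G, Continuous fun x : Y => g • x)
    (K K₁ K₂ : Subgroup G)
    (hK1 : K ≤ K₁) (hK2 : K ≤ K₂)
    (hgen : Subgroup.closure ((K₁ : Set G) ∪ (K₂ : Set G)) = ⊤)
    (y : Y)
    (hdense1 : ((K₁ : Set G) • ({y} : Set Y)) ⊆ closure ((K : Set G) • ({y} : Set Y)))
    (hdense2 : ((K₂ : Set G) • ({y} : Set Y)) ⊆ closure ((K : Set G) • ({y} : Set Y)))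
    (O : ℕ → Set Y)
    (hO0 : O 0 = {y})
    (hOsucc : ∀ l, O (l + 1) = (K₁ : Set G) • ((K₂ : Set G) • O l)) :
    ∀ l, O l ⊆ closure ((K : Set G) • ({y} : Set Y)) :=
  dense_in_alternating_products_general hcont K K₁ K₂ hK1 hK2 y hdense1 hdense2 O hO0 hOsucc
end
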